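/- For every integer k ≥ 3 and all positive integers m and n, r_k(2mn) ≥ r_k(m)·r_k(n). -/
import Mathlib


open Finset Pointwise

/-- The `k`-term arithmetic progression `{x, x+d, …, x+(k-1)d}` as a finite set. -/
def AP (k : ℕ) (x d : ℤ) : Finset ℤ := (Finset.range k).image (fun i : ℕ => x + (i : ℤ) * d)

/-- A set of integers is `k`-AP free if it contains no nontrivial `k`-term
arithmetic progression. -/
def APFree (k : ℕ) (A : Set ℤ) : Prop :=
  ∀ x d : ℤ, d ≠ 0 → ¬ (↑(AP k x d) : Set ℤ) ⊆ A

/-- `fAP s A` is the number of nontrivial `s`-term arithmetic progressions contained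
in the finite set `A`. -/
noncomputable def fAP (s : ℕ) (A : Finset ℤ) : ℕ :=
  Nat.card {P : Finset ℤ // P ⊆ A ∧ ∃ x d : ℤ, d ≠ 0 ∧ P = AP s x d}

/-- `fsk s k n` is the maximum number of nontrivial `s`-term arithmetic progressions
in a `k`-AP free set of `n` integers. -/
noncomputable def fsk (s k n : ℕ) : ℕ :=
  sSup {m | ∃ A : Finset ℤ, A.card = n ∧ APFree k ↑A ∧ fAP s A = m}

/-- `rk k n` is the size of the largest `k`-AP free subset of `{1, …, n}`. -/
noncomputable def rk (k n : ℕ) : ℕ :=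
  sSup {m | ∃ A : Finset ℤ, A ⊆ Finset.Icc 1 (n : ℤ) ∧ APFree k ↑A ∧ A.card = m}

/-- The partial sumset `A +_G B` along the edge set `E` of a bipartite graph. -/
def partialSumset (E : Finset (ℤ × ℤ)) : Finset ℤ := E.image (fun e => e.1 + e.2)

/-- `pathCount A B E a a'` is the number of (ordered) paths `(a, b, a'', b', a')` of
length four between `a` and `a'` in the bipartite graph with parts `A`, `B` and
edge set `E`. -/
def pathCount (A B : Finset ℤ) (E : Finset (ℤ × ℤ)) (a a' : ℤ) : ℕ :=
  ((B ×ˢ A ×ˢ B).filter (fun t =>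
    (a, t.1) ∈ E ∧ (t.2.1, t.1) ∈ E ∧ (t.2.1, t.2.2) ∈ E ∧ (a', t.2.2) ∈ E)).card

lemma mem_AP {k : ℕ} {x d y : ℤ} : y ∈ AP k x d ↔ ∃ i < k, y = x + (i : ℤ) * d := by
  simp [AP, eq_comm]

lemma rkSet_bdd (k n : ℕ) :
    BddAbove {m | ∃ A : Finset ℤ, A ⊆ Finset.Icc 1 (n : ℤ) ∧ APFree k ↑A ∧ A.card = m} := by
  refine ⟨(Finset.Icc (1:ℤ) (n:ℤ)).card, ?_⟩
  rintro c ⟨A, hA, -, rfl⟩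
  exact Finset.card_le_card hA

lemma apfree_empty (k : ℕ) (hk : 1 ≤ k) : APFree k (∅ : Set ℤ) := by
  intro x d _ hsub
  have hx : x ∈ AP k x d := mem_AP.2 ⟨0, hk, by ring⟩
  exact absurd (hsub hx) (by simp)

lemma rkSet_zero_mem (k n : ℕ) (hk : 1 ≤ k) :
    0 ∈ {m | ∃ A : Finset ℤ, A ⊆ Finset.Icc 1 (n : ℤ) ∧ APFree k ↑A ∧ A.card = m} :=
  ⟨∅, by simp, by simpa using apfree_empty k hk, rfl⟩

lemma rk_spec (k n : ℕ) (hk : 1 ≤ k) :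
    ∃ A : Finset ℤ, A ⊆ Finset.Icc 1 (n : ℤ) ∧ APFree k ↑A ∧ A.card = rk k n :=
  Nat.sSup_mem ⟨0, rkSet_zero_mem k n hk⟩ (rkSet_bdd k n)

theorem rk_supermultiplicative (k : ℕ) (hk : 3 ≤ k) (m n : ℕ) (hm : 0 < m) (hn : 0 < n) :
    rk k m * rk k n ≤ rk k (2 * m * n) := by
  have hk1 : 1 ≤ k := by omega
  obtain ⟨A, hA, hAfree, hAcard⟩ := rk_spec k m hk1
  obtain ⟨B, hB, hBfree, hBcard⟩ := rk_spec k n hk1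
  set f : ℤ × ℤ → ℤ := fun p => p.1 + 2 * (m : ℤ) * (p.2 - 1) with hf
  set C : Finset ℤ := (A ×ˢ B).image f with hC
  -- bounds of members
  have hmemA : ∀ a ∈ A, (1 : ℤ) ≤ a ∧ a ≤ (m : ℤ) := fun a ha => by
    have := hA ha; simp [Finset.mem_Icc] at this; exact this
  have hmemB : ∀ b ∈ B, (1 : ℤ) ≤ b ∧ b ≤ (n : ℤ) := fun b hb => by
    have := hB hb; simp [Finset.mem_Icc] at this; exact this
  -- injectivity
  have hinj : Set.InjOn f (A ×ˢ B : Finset (ℤ × ℤ)) := by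
    rintro ⟨a, b⟩ hab ⟨a', b'⟩ hab' heq
    simp [Finset.mem_product] at hab hab'
    obtain ⟨h1, h2⟩ := hmemA a hab.1
    obtain ⟨h1', h2'⟩ := hmemA a' hab'.1
    simp only [hf] at heq
    have hmZ : (0:ℤ) < (m:ℤ) := by exact_mod_cast hm
    have ht : a - a' = 2 * (m:ℤ) * (b' - b) := by linear_combination heq
    have hbb : b = b' := by
      rcases lt_trichotomy b b' with h | h | h
      · exfalso
        have h1b : (1:ℤ) ≤ b' - b := by omega
        nlinarith
      · exact h
      · exfalso
        have h1b : (1:ℤ) ≤ b - b' := by omega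
        nlinarith
    have haa : a = a' := by rw [hbb] at ht; linarith
    simp [Prod.ext_iff, haa, hbb]
  have hcard : C.card = rk k m * rk k n := by
    rw [hC, Finset.card_image_of_injOn hinj, Finset.card_product, hAcard, hBcard]
  -- C ⊆ Icc 1 (2mn)
  have hCsub : C ⊆ Finset.Icc 1 ((2 * m * n : ℕ) : ℤ) := by
    intro y hy
    simp only [hC, Finset.mem_image, Finset.mem_product] at hy
    obtain ⟨⟨a, b⟩, ⟨haA, hbB⟩, rfl⟩ := hy
    obtain ⟨h1, h2⟩ := hmemA a haA
    obtain ⟨h3, h4⟩ := hmemB b hbB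
    have hmZ : (0:ℤ) < (m:ℤ) := by exact_mod_cast hm
    simp only [Finset.mem_Icc, hf]
    push_cast
    constructor <;> nlinarith
  -- APFree
  have hCfree : APFree k (C : Set ℤ) := by
    intro x d hd hsub
    have hmem : ∀ i : ℕ, ∃ p : ℤ × ℤ, i < k →
        p.1 ∈ A ∧ p.2 ∈ B ∧ x + (i : ℤ) * d = p.1 + 2 * (m : ℤ) * (p.2 - 1) := by
      intro i
      by_cases hik : i < k
      · have : x + (i : ℤ) * d ∈ C := hsub (by exact_mod_cast mem_AP.2 ⟨i, hik, rfl⟩)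
        simp only [hC, Finset.mem_image, Finset.mem_product] at this
        obtain ⟨p, ⟨hp1, hp2⟩, hp3⟩ := this
        exact ⟨p, fun _ => ⟨hp1, hp2, hp3.symm⟩⟩
      · exact ⟨(0, 0), fun h => absurd h hik⟩
    choose p hp using hmem
    set a : ℕ → ℤ := fun i => (p i).1 with ha
    set b : ℕ → ℤ := fun i => (p i).2 with hb
    have heq : ∀ i, i < k → x + (i : ℤ) * d = a i + 2 * (m : ℤ) * (b i - 1) :=
      fun i hi => (hp i hi).2.2
    have haA : ∀ i, i < k → a i ∈ A := fun i hi => (hp i hi).1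
    have hbB : ∀ i, i < k → b i ∈ B := fun i hi => (hp i hi).2.1
    have hmZ : (0:ℤ) < (m:ℤ) := by exact_mod_cast hm
    -- differences constant
    set e : ℤ := a 1 - a 0 with he
    have hstep : ∀ i, i + 1 < k → a (i + 1) - a i = e := by
      intro i hi
      have e0 := heq 0 (by omega)
      have e1 := heq 1 (by omega)
      have ei := heq i (by omega)
      have ei1 := heq (i + 1) hi
      obtain ⟨l1, u1⟩ := hmemA _ (haA 0 (by omega))
      obtain ⟨l2, u2⟩ := hmemA _ (haA 1 (by omega))
      obtain ⟨l3, u3⟩ := hmemA _ (haA i (by omega))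
      obtain ⟨l4, u4⟩ := hmemA _ (haA (i + 1) hi)
      push_cast at ei1 e0 e1 ei
      have d1 : a 1 - a 0 - d = 2 * (m:ℤ) * (b 0 - b 1) := by linear_combination e0 - e1
      have d2 : a (i+1) - a i - d = 2 * (m:ℤ) * (b i - b (i+1)) := by
        linear_combination ei - ei1
      set t : ℤ := (b i - b (i+1)) - (b 0 - b 1) with htdef
      have hdiff : a (i+1) - a i - e = 2 * (m:ℤ) * t := by
        rw [he, htdef]; linear_combination d2 - d1
      rcases lt_trichotomy t 0 with h | h | h
      · exfalso
        have h1t : t ≤ -1 := by omega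
        have hmul : 2 * (m:ℤ) * t ≤ 2 * (m:ℤ) * (-1) :=
          mul_le_mul_of_nonneg_left h1t (by linarith)
        linarith
      · rw [h, mul_zero] at hdiff; linarith
      · exfalso
        have h1t : (1:ℤ) ≤ t := by omega
        have hmul : 2 * (m:ℤ) * 1 ≤ 2 * (m:ℤ) * t :=
          mul_le_mul_of_nonneg_left h1t (by linarith)
        linarith
    have hai : ∀ i, i < k → a i = a 0 + (i : ℤ) * e := by
      intro i
      induction i with
      | zero => intro _; ring
      | succ j ih =>
        intro hj
        have := hstep j hj
        have := ih (by omega)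
        push_cast
        linarith
    by_cases he0 : e ≠ 0
    · refine hAfree (a 0) e he0 ?_
      intro y hy
      obtain ⟨i, hi, rfl⟩ := mem_AP.1 (by exact_mod_cast hy)
      have := hai i hi
      rw [← this]
      exact_mod_cast haA i hi
    · push_neg at he0
      -- b i = b 0 + i * f
      have hd2m : d = 2 * (m:ℤ) * (b 1 - b 0) := by
        have e0 := heq 0 (by omega)
        have e1 := heq 1 (by omega)
        have h10 := hai 1 (by omega)
        rw [he0] at h10
        push_cast at e0 e1 h10 ⊢
        linear_combination e1 - e0 + h10
      set ff : ℤ := b 1 - b 0 with hff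
      have hff0 : ff ≠ 0 := by
        intro h; apply hd; rw [hd2m, h]; ring
      have hbi : ∀ i, i < k → b i = b 0 + (i : ℤ) * ff := by
        intro i hi
        have e0 := heq 0 (by omega)
        have ei := heq i hi
        have hai' := hai i hi
        rw [he0] at hai'
        have h2 : 2 * (m:ℤ) * (b i - b 0 - (i:ℤ) * ff) = 0 := by
          push_cast at e0 ei hai' ⊢
          linear_combination e0 - ei + (i:ℤ) * hd2m - hai'
        have := mul_eq_zero.1 h2
        rcases this with h | h
        · exfalso; omega
        · linarith
      refine hBfree (b 0) ff hff0 ?_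
      intro y hy
      obtain ⟨i, hi, rfl⟩ := mem_AP.1 (by exact_mod_cast hy)
      rw [← hbi i hi]
      exact_mod_cast hbB i hi
  -- conclude
  have hmemS : rk k m * rk k n ∈
      {c | ∃ A : Finset ℤ, A ⊆ Finset.Icc 1 ((2 * m * n : ℕ) : ℤ) ∧ APFree k ↑A ∧ A.card = c} :=
    ⟨C, hCsub, hCfree, hcard⟩
  exact le_csSup (rkSet_bdd k (2 * m * n)) hmemS
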